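/- For 1 ≤ i ≤ w ≤ n and disjoint i-sets M, M' with bijection ': M → M', the function f^{i,w,n} on w-subsets equals the induced function I^{i,w}(f^{i,i,n}), i.e., for every w-subset x, f^{i,w,n}(x) = Σ_{y ⊆ x, |y| = i} f^{i,i,n}(y). -/

import Mathlib

/-!
Writing `[P]` for the indicator of `P`, the Xor condition makes
`f^{i,k,n}(x) = ∏ⱼ ([m'ⱼ ∈ x] - [mⱼ ∈ x])`. Expanding the product writes `f` as a signed sum of
indicators `[T ⊆ x]`, one for each `i`-set `T` choosing one element from every pair. Each such
indicator is induced from `i`-sets, since `T` is the only `i`-subset of `x` containing `T`.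
-/

open Finset

/-- The function `f^{i,k,n}` built from disjoint paired `i`-sets, on `k`-subsets. -/
noncomputable def steinerFun (n i : ℕ) (m m' : Fin i → Fin n)
    (x : Finset (Fin n)) : ℝ :=
  if ∀ k : Fin i, Xor (m k ∈ x) (m' k ∈ x) then
    (-1 : ℝ) ^ ((x ∩ Finset.image m Finset.univ).card)
  else 0

section Induced

variable {α ι β R : Type*} [DecidableEq α] [Fintype ι] [DecidableEq ι] [Fintype β]

theorem sum_powersetCard_ite_subset [AddCommMonoidWithOne R] (x T : Finset α) :
    ∑ y ∈ x.powersetCard #T, (if T ⊆ y then (1 : R) else 0) = if T ⊆ x then 1 else 0 := by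
  split_ifs with hTx
  · rw [sum_eq_single_of_mem T (mem_powersetCard.2 ⟨hTx, rfl⟩), if_pos subset_rfl]
    intro y hy hne
    exact if_neg fun hTy => hne (eq_of_subset_of_card_le hTy (mem_powersetCard.1 hy).2.le).symm
  · exact sum_eq_zero fun y hy => if_neg fun hTy => hTx (hTy.trans (mem_powersetCard.1 hy).1)

theorem prod_sum_ite_mem_eq_sum [CommSemiring R] (p : ι → β → α) (c : ι → β → R)
    (y : Finset α) :
    ∏ k, ∑ b, c k b * (if p k b ∈ y then 1 else 0) =
      ∑ σ : ι → β, (∏ k, c k (σ k)) *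
        (if univ.image (fun k => p k (σ k)) ⊆ y then 1 else 0) := by
  simp only [Fintype.prod_sum, prod_mul_distrib, Fintype.prod_boole, image_subset_iff, mem_univ,
    true_implies]

theorem sum_powersetCard_prod_sum_ite_mem [CommSemiring R] {p : ι → β → α}
    (hp : ∀ k k' b b', p k b = p k' b' → k = k') (c : ι → β → R) (x : Finset α) :
    ∑ y ∈ x.powersetCard (Fintype.card ι), ∏ k, ∑ b, c k b * (if p k b ∈ y then 1 else 0) =
      ∏ k, ∑ b, c k b * (if p k b ∈ x then 1 else 0) := by
  simp only [prod_sum_ite_mem_eq_sum]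
  rw [sum_comm]
  refine sum_congr rfl fun σ _ => ?_
  have hcard : #(univ.image fun k => p k (σ k)) = Fintype.card ι :=
    card_image_of_injective _ fun k k' h => hp _ _ _ _ h
  rw [← mul_sum, ← hcard, sum_powersetCard_ite_subset]

end Induced

theorem Function.Injective.eq_of_cond_eq_cond {α ι : Type*} {f g : ι → α}
    (h : Function.Injective (Sum.elim f g)) {k k' : ι} {b b' : Bool}
    (heq : cond b (g k) (f k) = cond b' (g k') (f k')) : k = k' := by
  cases b <;> cases b'
  · exact Sum.inl.inj (h (a₁ := .inl k) (a₂ := .inl k') heq)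
  · exact absurd (h (a₁ := .inl k) (a₂ := .inr k') heq) Sum.inl_ne_inr
  · exact absurd (h (a₁ := .inr k) (a₂ := .inl k') heq) Sum.inr_ne_inl
  · exact Sum.inr.inj (h (a₁ := .inr k) (a₂ := .inr k') heq)

theorem steinerFun_eq_prod {n i : ℕ} {m : Fin i → Fin n} (hm : Function.Injective m)
    (m' : Fin i → Fin n) (x : Finset (Fin n)) :
    steinerFun n i m m' x =
      ∏ k, ((if m' k ∈ x then 1 else 0) - (if m k ∈ x then 1 else 0)) := by
  unfold steinerFun
  split_ifs with hxor
  · have hfactor : ∀ k, ((if m' k ∈ x then 1 else 0) - (if m k ∈ x then 1 else 0) : ℝ) =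
        if m k ∈ x then -1 else 1 := by
      intro k
      rcases hxor k with ⟨hmk, hm'k⟩ | ⟨hm'k, hmk⟩ <;> simp [hmk, hm'k]
    have hcard : #(x ∩ univ.image m) = #{k | m k ∈ x} := by
      rw [inter_comm, ← filter_mem_eq_inter, filter_image, card_image_of_injective _ hm]
    rw [prod_congr rfl fun k _ => hfactor k, prod_ite, prod_const, prod_const_one, mul_one, hcard]
  · obtain ⟨k, hk⟩ := not_forall.1 hxor
    refine (prod_eq_zero (mem_univ k) ?_).symm
    by_cases hmk : m k ∈ x <;> simp_all [xor_iff_not_iff]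

theorem steinerFun_eq_induced_general (n i w : ℕ)
    (m m' : Fin i → Fin n) (hinj : Function.Injective (Sum.elim m m')) :
    ∀ x : Finset (Fin n), x.card = w →
      steinerFun n i m m' x = ∑ y ∈ x.powersetCard i, steinerFun n i m m' y := by
  intro x _
  have hfactor : ∀ (y : Finset (Fin n)) k,
      ((if m' k ∈ y then 1 else 0) - (if m k ∈ y then 1 else 0) : ℝ) =
        ∑ b : Bool, cond b 1 (-1) * (if cond b (m' k) (m k) ∈ y then 1 else 0) := by
    intro y k
    simp only [Fintype.sum_bool, cond_true, cond_false]
    split_ifs <;> norm_num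
  simp only [steinerFun_eq_prod (m := m) (hinj.comp Sum.inl_injective), hfactor]
  simpa only [Fintype.card_fin] using
    (sum_powersetCard_prod_sum_ite_mem (fun _ _ _ _ => hinj.eq_of_cond_eq_cond) _ x).symm

/-- `f^{i,w,n}` equals the induced function `I^{i,w}(f^{i,i,n})`: for every `w`-subset
`x`, `f^{i,w,n}(x) = ∑_{y ⊆ x, |y| = i} f^{i,i,n}(y)`. -/
theorem steinerFun_eq_induced (n i w : ℕ) (hi : 1 ≤ i) (hiw : i ≤ w) (hwn : w ≤ n)
    (m m' : Fin i → Fin n) (hinj : Function.Injective (Sum.elim m m')) :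
    ∀ x : Finset (Fin n), x.card = w →
      steinerFun n i m m' x = ∑ y ∈ x.powersetCard i, steinerFun n i m m' y :=
  steinerFun_eq_induced_general n i w m m' hinj
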